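/- arXiv:2101.00971 — 2 statements merged into one kernel-verified Lean document; each statement's English description precedes it below -/
import Mathlib

section
/- The complete list of steady states (u₀,v₀,w₀) of the system with u₀v₀w₀ = 0 (assuming all relevant denominators nonzero and the coefficients generic, e.g. β₁, β₃, α₁, α₃ positive and β₁+κ₂α₂² ≠ 0, β₃+κ₁α₄² ≠ 0) consists of: (0,0,0), (0,1,0), (0,0,1), (1,0,0), ((β₁+α₂)/(β₁+κ₂α₂²), β₁(1−κ₂α₂)/(β₁+κ₂α₂²), 0), and (0, β₃(1−κ₁α₄)/(β₃+κ₁α₄²), (β₃+α₄)/(β₃+κ₁α₄²)). -/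
/-- Steady state: the three reaction terms of the rescaled system vanish. -/
def IsSteadyState (β₁ β₃ α₁ α₂ α₃ α₄ κ₁ κ₂ : ℝ) (u₀ v₀ w₀ : ℝ) : Prop :=
  β₁ * u₀ * (1 - u₀) - α₁ * u₀ * w₀ + α₂ * u₀ * v₀ = 0 ∧
  v₀ * (1 - v₀) + (κ₁ * α₃ + κ₂ * α₁) * u₀ * w₀
    - (κ₂ * α₂ * u₀ + κ₁ * α₄ * w₀) * v₀ = 0 ∧
  β₃ * w₀ * (1 - w₀) - α₃ * u₀ * w₀ + α₄ * v₀ * w₀ = 0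

/-!
On each coordinate face the system decouples. On `u = 0` and on `w = 0` the two surviving
equations form the same predator–prey system `x (β (1 - x) + α y) = 0`, `y (1 - y - κ α x) = 0`
(with `x = w` on `u = 0`), whose equilibria are the trivial one, the two semi-trivial ones and a
coexistence state obtained from a 2 × 2 linear system with determinant `β + κ α²`. On `v = 0` the
middle equation reduces to `(κ₁ α₃ + κ₂ α₁) u w = 0`, and the positive coefficient forces
`u w = 0`, leaving two decoupled logistic equations.
-/

theorem predator_prey_equilibrium_iff {β α κ x y : ℝ} (hβ : β ≠ 0) (hden : β + κ * α ^ 2 ≠ 0) :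
    x * (β * (1 - x) + α * y) = 0 ∧ y * (1 - y - κ * α * x) = 0 ↔
      (x = 0 ∧ y = 0) ∨ (x = 0 ∧ y = 1) ∨ (x = 1 ∧ y = 0) ∨
        (x = (β + α) / (β + κ * α ^ 2) ∧ y = β * (1 - κ * α) / (β + κ * α ^ 2)) := by
  constructor
  · rintro ⟨hx, hy⟩
    rcases mul_eq_zero.1 hx with rfl | hx <;> rcases mul_eq_zero.1 hy with rfl | hy
    · exact Or.inl ⟨rfl, rfl⟩
    · exact Or.inr <| Or.inl ⟨rfl, by linarith⟩
    · have hx : β * (1 - x) = β * 0 := by linarith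
      exact Or.inr <| Or.inr <| Or.inl ⟨by linarith [mul_left_cancel₀ hβ hx], rfl⟩
    · refine Or.inr <| Or.inr <| Or.inr ⟨?_, ?_⟩ <;> rw [eq_div_iff hden]
      · linear_combination -hx - α * hy
      · linear_combination -β * hy + κ * α * hx
  · rintro (⟨rfl, rfl⟩ | ⟨rfl, rfl⟩ | ⟨rfl, rfl⟩ | ⟨hx, hy⟩)
    iterate 3 norm_num
    rw [eq_div_iff hden] at hx hy
    constructor <;> refine mul_eq_zero_of_right _ (mul_right_cancel₀ hden ?_)
    · linear_combination -β * hx + α * hy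
    · linear_combination -hy - κ * α * hx

theorem logistic_equilibrium_iff {β x : ℝ} (hβ : β ≠ 0) : β * x * (1 - x) = 0 ↔ x = 0 ∨ x = 1 := by
  simp [hβ, sub_eq_zero, eq_comm (a := (1 : ℝ))]

theorem mul_add_mul_pos_of_sq_add_sq_ne_zero {α₁ α₃ κ₁ κ₂ : ℝ} (hα₁ : 0 ≤ α₁) (hα₃ : 0 ≤ α₃)
    (hα : α₁ ^ 2 + α₃ ^ 2 ≠ 0) (hκ₁ : 0 < κ₁) (hκ₂ : 0 < κ₂) : 0 < κ₁ * α₃ + κ₂ * α₁ := by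
  rcases hα₁.eq_or_lt with rfl | hα₁
  · have hα₃ : 0 < α₃ := hα₃.lt_of_ne' <| by rintro rfl; exact hα (by ring)
    linarith [mul_pos hκ₁ hα₃]
  · linarith [mul_nonneg hκ₁.le hα₃, mul_pos hκ₂ hα₁]

section Faces

variable {β₁ β₃ α₁ α₂ α₃ α₄ κ₁ κ₂ u v w : ℝ}

theorem isSteadyState_zero_fst_iff (hβ₃ : β₃ ≠ 0) (hden : β₃ + κ₁ * α₄ ^ 2 ≠ 0) :
    IsSteadyState β₁ β₃ α₁ α₂ α₃ α₄ κ₁ κ₂ 0 v w ↔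
      (w = 0 ∧ v = 0) ∨ (w = 0 ∧ v = 1) ∨ (w = 1 ∧ v = 0) ∨
        (w = (β₃ + α₄) / (β₃ + κ₁ * α₄ ^ 2) ∧ v = β₃ * (1 - κ₁ * α₄) / (β₃ + κ₁ * α₄ ^ 2)) := by
  rw [← predator_prey_equilibrium_iff hβ₃ hden, IsSteadyState]
  constructor
  · rintro ⟨-, hv, hw⟩
    exact ⟨by linear_combination hw, by linear_combination hv⟩
  · rintro ⟨hw, hv⟩
    exact ⟨by ring, by linear_combination hv, by linear_combination hw⟩

theorem isSteadyState_zero_thd_iff (hβ₁ : β₁ ≠ 0) (hden : β₁ + κ₂ * α₂ ^ 2 ≠ 0) :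
    IsSteadyState β₁ β₃ α₁ α₂ α₃ α₄ κ₁ κ₂ u v 0 ↔
      (u = 0 ∧ v = 0) ∨ (u = 0 ∧ v = 1) ∨ (u = 1 ∧ v = 0) ∨
        (u = (β₁ + α₂) / (β₁ + κ₂ * α₂ ^ 2) ∧ v = β₁ * (1 - κ₂ * α₂) / (β₁ + κ₂ * α₂ ^ 2)) := by
  rw [← predator_prey_equilibrium_iff hβ₁ hden, IsSteadyState]
  constructor
  · rintro ⟨hu, hv, -⟩
    exact ⟨by linear_combination hu, by linear_combination hv⟩
  · rintro ⟨hu, hv⟩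
    exact ⟨by linear_combination hu, by linear_combination hv, by ring⟩

theorem isSteadyState_zero_snd_iff (hβ₁ : β₁ ≠ 0) (hβ₃ : β₃ ≠ 0)
    (hc : κ₁ * α₃ + κ₂ * α₁ ≠ 0) :
    IsSteadyState β₁ β₃ α₁ α₂ α₃ α₄ κ₁ κ₂ u 0 w ↔
      (u = 0 ∧ w = 0) ∨ (u = 0 ∧ w = 1) ∨ (u = 1 ∧ w = 0) := by
  constructor
  · rintro ⟨hu, hv, hw⟩
    have huw : u * w = 0 :=
      (mul_eq_zero.1 (by linear_combination hv : (κ₁ * α₃ + κ₂ * α₁) * (u * w) = 0)).resolve_left hc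
    have hu' := (logistic_equilibrium_iff (x := u) hβ₁).1 (by linear_combination hu + α₁ * huw)
    have hw' := (logistic_equilibrium_iff (x := w) hβ₃).1 (by linear_combination hw + α₃ * huw)
    rcases hu' with rfl | rfl <;> rcases hw' with rfl | rfl <;> simp at huw ⊢
  · rintro (⟨rfl, rfl⟩ | ⟨rfl, rfl⟩ | ⟨rfl, rfl⟩) <;> norm_num [IsSteadyState]

end Faces

theorem steady_states_with_zero_product_general
    (β₁ β₃ α₁ α₂ α₃ α₄ κ₁ κ₂ : ℝ)
    (hβ₁ : 0 < β₁) (hβ₃ : 0 < β₃)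
    (hα₁ : 0 ≤ α₁) (hα₃ : 0 ≤ α₃) (hα : α₁ ^ 2 + α₃ ^ 2 ≠ 0)
    (hκ₁ : 0 < κ₁) (hκ₂ : 0 < κ₂)
    (hden₁ : β₁ + κ₂ * α₂ ^ 2 ≠ 0) (hden₂ : β₃ + κ₁ * α₄ ^ 2 ≠ 0) :
    {p : ℝ × ℝ × ℝ |
        IsSteadyState β₁ β₃ α₁ α₂ α₃ α₄ κ₁ κ₂ p.1 p.2.1 p.2.2 ∧
        p.1 * p.2.1 * p.2.2 = 0} =
      {((0 : ℝ), (0 : ℝ), (0 : ℝ)), (0, 1, 0), (0, 0, 1), (1, 0, 0),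
        ((β₁ + α₂) / (β₁ + κ₂ * α₂ ^ 2),
          β₁ * (1 - κ₂ * α₂) / (β₁ + κ₂ * α₂ ^ 2), 0),
        (0, β₃ * (1 - κ₁ * α₄) / (β₃ + κ₁ * α₄ ^ 2),
          (β₃ + α₄) / (β₃ + κ₁ * α₄ ^ 2))} := by
  have hc := (mul_add_mul_pos_of_sq_add_sq_ne_zero hα₁ hα₃ hα hκ₁ hκ₂).ne'
  ext ⟨u, v, w⟩
  simp only [Set.mem_ofPred_eq, Set.mem_insert_iff, Set.mem_singleton_iff, Prod.mk.injEq]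
  constructor
  · rintro ⟨h, huvw⟩
    rcases mul_eq_zero.1 huvw with huv | rfl
    · rcases mul_eq_zero.1 huv with rfl | rfl
      · rcases (isSteadyState_zero_fst_iff hβ₃.ne' hden₂).1 h with
          ⟨rfl, rfl⟩ | ⟨rfl, rfl⟩ | ⟨rfl, rfl⟩ | ⟨rfl, rfl⟩ <;> simp
      · rcases (isSteadyState_zero_snd_iff hβ₁.ne' hβ₃.ne' hc).1 h with
          ⟨rfl, rfl⟩ | ⟨rfl, rfl⟩ | ⟨rfl, rfl⟩ <;> simp
    · rcases (isSteadyState_zero_thd_iff hβ₁.ne' hden₁).1 h with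
        ⟨rfl, rfl⟩ | ⟨rfl, rfl⟩ | ⟨rfl, rfl⟩ | ⟨rfl, rfl⟩ <;> simp
  · rintro (⟨rfl, rfl, rfl⟩ | ⟨rfl, rfl, rfl⟩ | ⟨rfl, rfl, rfl⟩ | ⟨rfl, rfl, rfl⟩ |
      ⟨rfl, rfl, rfl⟩ | ⟨rfl, rfl, rfl⟩) <;> refine ⟨?_, by simp⟩
    all_goals first
      | exact (isSteadyState_zero_fst_iff hβ₃.ne' hden₂).2 (by simp)
      | exact (isSteadyState_zero_thd_iff hβ₁.ne' hden₁).2 (by simp)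

theorem steady_states_with_zero_product
    (β₁ β₃ α₁ α₂ α₃ α₄ κ₁ κ₂ : ℝ)
    (hβ₁ : 0 < β₁) (hβ₃ : 0 < β₃)
    (hα₁ : 0 ≤ α₁) (hα₃ : 0 ≤ α₃) (hα : α₁ ^ 2 + α₃ ^ 2 ≠ 0)
    (hα₂ : 0 ≤ α₂) (hα₄ : 0 ≤ α₄)
    (hκ₁ : 0 < κ₁) (hκ₂ : 0 < κ₂)
    (hden₁ : β₁ + κ₂ * α₂ ^ 2 ≠ 0) (hden₂ : β₃ + κ₁ * α₄ ^ 2 ≠ 0) :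
    {p : ℝ × ℝ × ℝ |
        IsSteadyState β₁ β₃ α₁ α₂ α₃ α₄ κ₁ κ₂ p.1 p.2.1 p.2.2 ∧
        p.1 * p.2.1 * p.2.2 = 0} =
      {((0 : ℝ), (0 : ℝ), (0 : ℝ)), (0, 1, 0), (0, 0, 1), (1, 0, 0),
        ((β₁ + α₂) / (β₁ + κ₂ * α₂ ^ 2),
          β₁ * (1 - κ₂ * α₂) / (β₁ + κ₂ * α₂ ^ 2), 0),
        (0, β₃ * (1 - κ₁ * α₄) / (β₃ + κ₁ * α₄ ^ 2),
          (β₃ + α₄) / (β₃ + κ₁ * α₄ ^ 2))} :=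
  steady_states_with_zero_product_general β₁ β₃ α₁ α₂ α₃ α₄ κ₁ κ₂ hβ₁ hβ₃ hα₁ hα₃ hα hκ₁ hκ₂ hden₁
    hden₂
end

section
/- Let μ, d₁, d₃, α₂, α₄ be reals with the remaining coefficients defined by β₁ = 2α₂²(α₄+(2μ−5)d₃)/((10d₁−μ+2α₂)α₄) + 24d₁ − α₂, α₁ = 16d₁ − 4μ + β₁, α₃ = d₃β₁/(3d₁), κ₁ = (5−2μ)/α₄, κ₂ = β₁(α₂+β₁−24d₁)/(24d₁α₂²), β₃ = (2(2d₃−μ)α₂ + (β₁−24d₁)α₄)/α₂ (assume all denominators nonzero). Then u(t,x) = (6d₁/β₁)(1−tanh(x−μt))², v(t,x) = ((24d₁−β₁)/(2α₂))(1−tanh(x−μt)), w(t,x) = ½ + ½tanh(x−μt) is an exact solution of the system u_t = d₁u_xx + β₁u(1−u) − α₁uw + α₂uv, v_t = v_xx + v(1−v) + (κ₁α₃+κ₂α₁)uw − (κ₂α₂u+κ₁α₄w)v, w_t = d₃w_xx + β₃w(1−w) − α₃uw + α₄vw. -/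
open Real

noncomputable def pdt (f : ℝ → ℝ → ℝ) (t x : ℝ) : ℝ := deriv (fun s => f s x) t

noncomputable def pdxx (f : ℝ → ℝ → ℝ) (t x : ℝ) : ℝ := deriv (deriv (f t)) x

/-- The rescaled language-competition system (1-4). -/
def LangSys (d₁ d₃ β₁ β₃ α₁ α₂ α₃ α₄ κ₁ κ₂ : ℝ) (u v w : ℝ → ℝ → ℝ) : Prop :=
  ∀ t x : ℝ,
    pdt u t x = d₁ * pdxx u t x + β₁ * u t x * (1 - u t x)
        - α₁ * u t x * w t x + α₂ * u t x * v t x ∧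
    pdt v t x = pdxx v t x + v t x * (1 - v t x)
        + (κ₁ * α₃ + κ₂ * α₁) * u t x * w t x
        - (κ₂ * α₂ * u t x + κ₁ * α₄ * w t x) * v t x ∧
    pdt w t x = d₃ * pdxx w t x + β₃ * w t x * (1 - w t x)
        - α₃ * u t x * w t x + α₄ * v t x * w t x

/-! All three profiles are polynomials in `T = tanh (x - μ t)`. Since `tanh' = 1 - tanh ^ 2`,
their derivatives in `t` and `x` are again polynomials in `T`, so each equation of the system
becomes a polynomial identity in `T`. The `u`- and `w`-equations hold identically once `α₁`, `α₃`
and `β₃` are substituted; the residual of the `v`-equation is `(1 - T) ^ 2 (1 + T)` times the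
relation defining `β₁`. -/

open Polynomial

theorem Real.hasDerivAt_tanh (x : ℝ) : HasDerivAt tanh (1 - tanh x ^ 2) x := by
  have h := (hasDerivAt_sinh x).div (hasDerivAt_cosh x) (cosh_pos x).ne'
  have e : (cosh x * cosh x - sinh x * sinh x) / cosh x ^ 2 = 1 - tanh x ^ 2 := by
    rw [tanh_eq_sinh_div_cosh]
    have := cosh_sq_sub_sinh_sq x
    field_simp
  rw [e] at h
  exact h.congr_of_eventuallyEq (.of_forall tanh_eq_sinh_div_cosh)

theorem pdt_comp_sub_mul {g : ℝ → ℝ} (μ t x : ℝ) (hg : DifferentiableAt ℝ g (x - μ * t)) :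
    pdt (fun t x => g (x - μ * t)) t x = -μ * deriv g (x - μ * t) := by
  have h : HasDerivAt (fun s => x - μ * s) (-μ) t := by
    simpa using ((hasDerivAt_id t).const_mul μ).const_sub x
  exact (hg.hasDerivAt.comp t h).deriv.trans (mul_comm _ _)

theorem pdxx_comp_sub_mul (g : ℝ → ℝ) (μ t x : ℝ) :
    pdxx (fun t x => g (x - μ * t)) t x = deriv (deriv g) (x - μ * t) := by
  have h : ∀ f : ℝ → ℝ, deriv (fun y => f (y - μ * t)) = fun y => deriv f (y - μ * t) :=
    fun f => by ext y; exact deriv_comp_sub_const (f := f) _ _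
  simp only [pdxx, h]

namespace Polynomial

noncomputable def tanhDeriv (p : ℝ[X]) : ℝ[X] := derivative p * (1 - X ^ 2)

theorem hasDerivAt_eval_tanh (p : ℝ[X]) (y : ℝ) :
    HasDerivAt (fun y => p.eval (tanh y)) (p.tanhDeriv.eval (tanh y)) y := by
  have h := (p.hasDerivAt (tanh y)).comp y (Real.hasDerivAt_tanh y)
  simp only [tanhDeriv, eval_mul, eval_sub, eval_one, eval_pow, eval_X]
  exact h

theorem deriv_eval_tanh (p : ℝ[X]) :
    deriv (fun y => p.eval (tanh y)) = fun y => p.tanhDeriv.eval (tanh y) := by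
  ext y
  exact (p.hasDerivAt_eval_tanh y).deriv

theorem pdt_eval_tanh (p : ℝ[X]) (μ t x : ℝ) :
    pdt (fun t x => p.eval (tanh (x - μ * t))) t x
      = -μ * p.tanhDeriv.eval (tanh (x - μ * t)) := by
  rw [pdt_comp_sub_mul (g := fun y => p.eval (tanh y)) μ t x
    (p.hasDerivAt_eval_tanh _).differentiableAt, p.deriv_eval_tanh]

theorem pdxx_eval_tanh (p : ℝ[X]) (μ t x : ℝ) :
    pdxx (fun t x => p.eval (tanh (x - μ * t))) t x
      = p.tanhDeriv.tanhDeriv.eval (tanh (x - μ * t)) := by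
  rw [pdxx_comp_sub_mul (fun y => p.eval (tanh y)), p.deriv_eval_tanh,
    p.tanhDeriv.deriv_eval_tanh]

end Polynomial

theorem exact_solution_2_4
    (μ d₁ d₃ α₂ α₄ β₁ α₁ α₃ κ₁ κ₂ β₃ : ℝ)
    (hd₁ : d₁ ≠ 0) (hβ₁ : β₁ ≠ 0) (hα₂ : α₂ ≠ 0) (hα₄ : α₄ ≠ 0)
    (hF : 10 * d₁ - μ + 2 * α₂ ≠ 0)
    (hβ₁def : β₁ = 2 * α₂ ^ 2 * (α₄ + (2 * μ - 5) * d₃) /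
        ((10 * d₁ - μ + 2 * α₂) * α₄) + 24 * d₁ - α₂)
    (hα₁def : α₁ = 16 * d₁ - 4 * μ + β₁)
    (hα₃def : α₃ = d₃ * β₁ / (3 * d₁))
    (hκ₁def : κ₁ = (5 - 2 * μ) / α₄)
    (hκ₂def : κ₂ = β₁ * (α₂ + β₁ - 24 * d₁) / (24 * d₁ * α₂ ^ 2))
    (hβ₃def : β₃ = (2 * (2 * d₃ - μ) * α₂ + (β₁ - 24 * d₁) * α₄) / α₂) :
    LangSys d₁ d₃ β₁ β₃ α₁ α₂ α₃ α₄ κ₁ κ₂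
      (fun t x => 6 * d₁ / β₁ * (1 - Real.tanh (x - μ * t)) ^ 2)
      (fun t x => (24 * d₁ - β₁) / (2 * α₂) * (1 - Real.tanh (x - μ * t)))
      (fun t x => 1 / 2 + 1 / 2 * Real.tanh (x - μ * t)) := by
  have hβ₁rel : (β₁ - 24 * d₁ + α₂) * ((10 * d₁ - μ + 2 * α₂) * α₄)
      = 2 * α₂ ^ 2 * (α₄ + (2 * μ - 5) * d₃) := by
    field_simp at hβ₁def
    linarith
  have hu : (fun t x => 6 * d₁ / β₁ * (1 - tanh (x - μ * t)) ^ 2)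
      = fun t x => (C (6 * d₁ / β₁) * (1 - X) ^ 2).eval (tanh (x - μ * t)) := by simp
  have hv : (fun t x => (24 * d₁ - β₁) / (2 * α₂) * (1 - tanh (x - μ * t)))
      = fun t x => (C ((24 * d₁ - β₁) / (2 * α₂)) * (1 - X)).eval (tanh (x - μ * t)) := by simp
  have hw : (fun t x => 1 / 2 + 1 / 2 * tanh (x - μ * t))
      = fun t x => (C (1 / 2 : ℝ) + C (1 / 2) * X).eval (tanh (x - μ * t)) := by simp
  rw [hu, hv, hw]
  intro t x
  simp only [pdt_eval_tanh, pdxx_eval_tanh]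
  simp only [tanhDeriv, derivative_mul, derivative_C, derivative_pow, derivative_sub,
    derivative_add, derivative_one, derivative_X, derivative_zero, eval_mul, eval_C, eval_pow,
    eval_sub, eval_add, eval_one, eval_X, eval_zero]
  generalize tanh (x - μ * t) = T
  refine ⟨?_, ?_, ?_⟩
  · rw [hα₁def]
    field_simp
    ring
  · rw [hα₁def, hα₃def, hκ₁def, hκ₂def]
    field_simp
    linear_combination (-144 * (1 - T) ^ 2 * (1 + T)) * hβ₁rel
  · rw [hα₃def, hβ₃def]
    field_simp
    ring
end
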